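/- arXiv:2206.01472 — 2 statements merged into one kernel-verified Lean document; each statement's English description precedes it below -/
import Mathlib

section
/- Let α ∈ ℝ with 0 < α < 1 and ω = √(1−α²). The 4×4 matrix A = [[3, iα, 0, 0],[3iα, 1, 2iα, 0],[0, 2iα, −1, 3iα],[0, 0, iα, −3]] has eigenvalues −3ω, −ω, ω, 3ω. -/
open Matrix Polynomial Complex

set_option maxHeartbeats 2000000 in
/-- for `0 < α < 1` and `ω = √(1−α²)`, the matrix
`A = [[3, iα, 0, 0],[3iα, 1, 2iα, 0],[0, 2iα, −1, 3iα],[0, 0, iα, −3]]`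
has eigenvalues `−3ω, −ω, ω, 3ω`. -/
theorem degree_three_spectrum (α : ℝ) (hα0 : 0 < α) (hα1 : α < 1) :
    letI ω : ℝ := Real.sqrt (1 - α ^ 2)
    letI A : Matrix (Fin 4) (Fin 4) ℂ :=
      !![3, Complex.I * α, 0, 0;
         3 * Complex.I * α, 1, 2 * Complex.I * α, 0;
         0, 2 * Complex.I * α, -1, 3 * Complex.I * α;
         0, 0, Complex.I * α, -3]
    A.charpoly = (X - C (-3 * (ω : ℂ))) * (X - C (-(ω : ℂ))) *
        (X - C (ω : ℂ)) * (X - C (3 * (ω : ℂ))) := by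
  set ω : ℝ := Real.sqrt (1 - α ^ 2) with hωdef
  have hsq : ω ^ 2 = 1 - α ^ 2 := Real.sq_sqrt (by nlinarith)
  have hω2 : (ω : ℂ) ^ 2 = 1 - (α : ℂ) ^ 2 := by exact_mod_cast congrArg Complex.ofReal hsq
  rw [Matrix.charpoly]
  have hM : (!![3, Complex.I * α, 0, 0;
         3 * Complex.I * α, 1, 2 * Complex.I * α, 0;
         0, 2 * Complex.I * α, -1, 3 * Complex.I * α;
         0, 0, Complex.I * α, -3] : Matrix (Fin 4) (Fin 4) ℂ).charmatrix =
      !![X - C 3, -C (Complex.I * α), 0, 0;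
         -C (3 * Complex.I * α), X - C 1, -C (2 * Complex.I * α), 0;
         0, -C (2 * Complex.I * α), X + C 1, -C (3 * Complex.I * α);
         0, 0, -C (Complex.I * α), X + C 3] := by
    ext i j
    fin_cases i <;> fin_cases j <;>
      simp [Matrix.charmatrix_apply, Matrix.diagonal_apply, sub_eq_add_neg, Matrix.vecHead, Matrix.vecTail]
  rw [hM]
  rw [Matrix.det_succ_row_zero]
  simp [Fin.sum_univ_succ, Matrix.det_succ_row_zero, Matrix.det_fin_three, Fin.succAbove, Matrix.vecHead, Matrix.vecTail]
  have hCI : (C Complex.I : Polynomial ℂ) ^ 2 = -1 := by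
    rw [← map_pow, Complex.I_sq]; simp
  have hCI4 : (C Complex.I : Polynomial ℂ) ^ 4 = 1 := by
    rw [show (4:ℕ) = 2*2 from rfl, pow_mul, hCI]; ring
  have hCω : (C (ω:ℂ)) ^ 2 = 1 - (C (α:ℂ)) ^ 2 := by
    rw [← map_pow, hω2]; simp
  ring_nf
  rw [show (C (ω:ℂ)) ^ 4 = ((C (ω:ℂ)) ^ 2) ^ 2 by ring, hCω, hCI, hCI4]
  simp only [map_ofNat (C : ℂ →+* Polynomial ℂ) 3, map_ofNat (C : ℂ →+* Polynomial ℂ) 2]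
  ring
end

section
/- Let A_m be the (m+1)×(m+1) tridiagonal matrix with entries (A_m)_{k,k} = m−2k for k = 0,…,m, (A_m)_{k,k+1} = i·α·(k+1), and (A_m)_{k+1,k} = i·α·(m−k), with α real and |α| < 1. Then the characteristic polynomial of A_m equals ∏_{k=0}^{m} (λ − (m−2k)·ω) where ω = √(1−α²); equivalently, the spectrum of A_m is {(m−2k)·ω : k = 0,…,m}. Verify this for m = 2 and m = 3. -/
open Matrix Polynomial Complex

/-- The `(m+1)×(m+1)` tridiagonal matrix `A_m` with diagonal `m−2k`,
superdiagonal `iα(k+1)` and subdiagonal `iα(m−k)`. -/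
def Amat (m : ℕ) (α : ℝ) : Matrix (Fin (m + 1)) (Fin (m + 1)) ℂ :=
  fun k l =>
    if (k : ℕ) = l then (m : ℂ) - 2 * (k : ℕ)
    else if (l : ℕ) = (k : ℕ) + 1 then Complex.I * α * ((k : ℕ) + 1)
    else if (k : ℕ) = (l : ℕ) + 1 then Complex.I * α * ((m : ℂ) - (l : ℕ))
    else 0

lemma pow_deriv_aux (p : ℂ[X]) (n : ℕ) :
    p * derivative (p ^ n) = C (n : ℂ) * derivative p * p ^ n := by
  rcases n with _ | n
  · simp
  · rw [derivative_pow, pow_succ]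
    push_cast
    ring

section key
variable (w a : ℂ)

noncomputable def gP : ℂ[X] := C (1 + w) + C a * X
noncomputable def hP : ℂ[X] := C a - C (1 + w) * X

lemma key_identity (ha : a ^ 2 = w ^ 2 - 1) (m j : ℕ) (hj : j ≤ m) :
    C ((1 + w) * m) * (gP w a ^ (m - j) * hP w a ^ j)
      + C ((1 + w) * m * a) * (gP w a ^ (m - j) * hP w a ^ j * X)
      + C ((1 + w) * a) * derivative (gP w a ^ (m - j) * hP w a ^ j)
      - C (2 * (1 + w)) * (derivative (gP w a ^ (m - j) * hP w a ^ j) * X)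
      - C ((1 + w) * a) * (derivative (gP w a ^ (m - j) * hP w a ^ j) * X ^ 2)
      = C ((1 + w) * (((m : ℂ) - 2 * j) * w)) * (gP w a ^ (m - j) * hP w a ^ j) := by
  set n := m - j with hn
  have hmC : (C (m : ℂ) : ℂ[X]) = C (n : ℂ) + C (j : ℂ) := by
    rw [← C_add]; congr 1; push_cast [hn, Nat.cast_sub hj]; ring
  have haC : (C a : ℂ[X]) ^ 2 = (C w) ^ 2 - 1 := by
    rw [← C_pow, ha]; simp
  have hdg : derivative (gP w a) = C a := by simp [gP]
  have hdh : derivative (hP w a) = -C (1 + w) := by simp [hP]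
  have h1 : gP w a * derivative (gP w a ^ n) = C (n : ℂ) * C a * gP w a ^ n := by
    rw [pow_deriv_aux, hdg]
  have h2 : hP w a * derivative (hP w a ^ j) = C (j : ℂ) * (-C (1 + w)) * hP w a ^ j := by
    rw [pow_deriv_aux, hdh]
  have hGH : gP w a * hP w a * derivative (gP w a ^ n * hP w a ^ j)
      = (C ((n : ℂ) * a) * hP w a - C ((j : ℂ) * (1 + w)) * gP w a)
        * (gP w a ^ n * hP w a ^ j) := by
    rw [derivative_mul]
    simp only [C_mul]
    linear_combination (hP w a * hP w a ^ j) * h1 + (gP w a * gP w a ^ n) * h2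
  have ghExpand : gP w a * hP w a
      = C ((1 + w) * a) - C (2 * (1 + w)) * X - C ((1 + w) * a) * X ^ 2 := by
    have C2 : (C 2 : ℂ[X]) = 2 := map_ofNat C 2
    simp only [gP, hP, C_mul, C_add, C_1, C2]
    linear_combination X * haC
  -- final combination
  have C2 : (C 2 : ℂ[X]) = 2 := map_ofNat C 2
  simp only [gP, hP, C_mul, C_add, C_sub, C_1, C2] at hGH ghExpand hmC ⊢
  linear_combination hGH
    - (derivative ((1 + C w + C a * X) ^ n * (C a - (1 + C w) * X) ^ j)) * ghExpand
    + (((1 + C w + C a * X) ^ n * (C a - (1 + C w) * X) ^ j)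
        * (1 - C w ^ 2 + C a * (1 + C w) * X)) * hmC
    + (((1 + C w + C a * X) ^ n * (C a - (1 + C w) * X) ^ j) * C (n : ℂ)) * haC
end key

lemma Amat_mulVec (m : ℕ) (α : ℝ) (c : ℕ → ℂ) (hc : c (m + 1) = 0) (k : Fin (m + 1)) :
    (Amat m α).mulVec (fun l => c (l : ℕ)) k
      = ((m : ℂ) - 2 * (k : ℕ)) * c k
        + Complex.I * α * ((k : ℕ) + 1) * c ((k : ℕ) + 1)
        + (if (k : ℕ) = 0 then 0
           else Complex.I * α * ((m : ℂ) - (((k : ℕ) - 1 : ℕ) : ℂ)) * c ((k : ℕ) - 1)) := by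
  have hstep : (Amat m α).mulVec (fun l => c (l : ℕ)) k
      = ∑ l ∈ Finset.range (m + 1),
          (if (k : ℕ) = l then (m : ℂ) - 2 * (k : ℕ)
            else if l = (k : ℕ) + 1 then Complex.I * α * ((k : ℕ) + 1)
            else if (k : ℕ) = l + 1 then Complex.I * α * ((m : ℂ) - l)
            else 0) * c l := by
    rw [Matrix.mulVec, dotProduct]
    exact Fin.sum_univ_eq_sum_range
      (fun l => (if (k : ℕ) = l then (m : ℂ) - 2 * (k : ℕ)
            else if l = (k : ℕ) + 1 then Complex.I * α * ((k : ℕ) + 1)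
            else if (k : ℕ) = l + 1 then Complex.I * α * ((m : ℂ) - l)
            else 0) * c l) (m + 1)
  rw [hstep]
  have hklt := k.isLt
  have hterm : ∀ l, (if (k : ℕ) = l then (m : ℂ) - 2 * (k : ℕ)
            else if l = (k : ℕ) + 1 then Complex.I * α * ((k : ℕ) + 1)
            else if (k : ℕ) = l + 1 then Complex.I * α * ((m : ℂ) - l)
            else 0) * c l
      = (if l = (k : ℕ) then ((m : ℂ) - 2 * (k : ℕ)) * c (k : ℕ) else 0)
        + ((if l = (k : ℕ) + 1 then Complex.I * α * ((k : ℕ) + 1) * c ((k : ℕ) + 1) else 0)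
          + (if l = (k : ℕ) - 1 ∧ (k : ℕ) ≠ 0 then
              Complex.I * α * ((m : ℂ) - (((k : ℕ) - 1 : ℕ) : ℂ)) * c ((k : ℕ) - 1) else 0)) := by
    intro l
    rcases eq_or_ne ((k : ℕ)) l with h1 | h1
    · rw [if_pos h1, if_pos h1.symm, if_neg (show ¬l = (k : ℕ) + 1 by omega),
        if_neg (show ¬(l = (k : ℕ) - 1 ∧ (k : ℕ) ≠ 0) by omega), ← h1]
      ring
    · rw [if_neg h1, if_neg (show ¬l = (k : ℕ) from fun h => h1 h.symm)]
      rcases eq_or_ne l ((k : ℕ) + 1) with h2 | h2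
      · rw [if_pos h2, if_pos h2,
          if_neg (show ¬(l = (k : ℕ) - 1 ∧ (k : ℕ) ≠ 0) by omega), h2]
        ring
      · rw [if_neg h2, if_neg h2]
        rcases eq_or_ne ((k : ℕ)) (l + 1) with h3 | h3
        · rw [if_pos h3, if_pos (show l = (k : ℕ) - 1 ∧ (k : ℕ) ≠ 0 by omega)]
          have h4 : (k : ℕ) - 1 = l := by omega
          rw [h4]; ring
        · rw [if_neg h3, if_neg (show ¬(l = (k : ℕ) - 1 ∧ (k : ℕ) ≠ 0) by omega)]
          ring
  rw [Finset.sum_congr rfl (fun l _ => hterm l), Finset.sum_add_distrib,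
    Finset.sum_add_distrib,
    Finset.sum_ite_eq' (Finset.range (m+1)) ((k:ℕ)),
    Finset.sum_ite_eq' (Finset.range (m+1)) ((k:ℕ)+1)]
  have e2 : (if (k : ℕ) + 1 ∈ Finset.range (m+1) then
        Complex.I * α * ((k : ℕ) + 1) * c ((k : ℕ) + 1) else 0)
      = Complex.I * α * ((k : ℕ) + 1) * c ((k : ℕ) + 1) := by
    rcases eq_or_ne ((k : ℕ)) m with hk | hk
    · have h5 : (k : ℕ) + 1 = m + 1 := by omega
      rw [if_neg (by simp [Finset.mem_range]; omega), h5, hc, mul_zero]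
    · rw [if_pos (Finset.mem_range.2 (by omega))]
  have e3 : (∑ l ∈ Finset.range (m+1), if l = (k : ℕ) - 1 ∧ (k : ℕ) ≠ 0 then
        Complex.I * α * ((m : ℂ) - (((k : ℕ) - 1 : ℕ) : ℂ)) * c ((k : ℕ) - 1) else 0)
      = (if (k : ℕ) = 0 then 0
          else Complex.I * α * ((m : ℂ) - (((k : ℕ) - 1 : ℕ) : ℂ)) * c ((k : ℕ) - 1)) := by
    rcases eq_or_ne ((k : ℕ)) 0 with hk | hk
    · rw [if_pos hk]
      exact Finset.sum_eq_zero fun l _ => if_neg (by omega)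
    · rw [if_neg hk]
      have h6 : ∀ l : ℕ, (l = (k : ℕ) - 1 ∧ (k : ℕ) ≠ 0) = (l = (k : ℕ) - 1) := by
        intro l; simp [hk]
      simp_rw [h6]
      rw [Finset.sum_ite_eq' (Finset.range (m+1)) ((k:ℕ)-1),
        if_pos (Finset.mem_range.2 (by omega))]
  rw [if_pos (Finset.mem_range.2 (by omega)), e2, e3, ← add_assoc]

lemma coeff_E0 (w a : ℂ) (ha : a ^ 2 = w ^ 2 - 1) (m j : ℕ) (hj : j ≤ m) :
    (1 + w) * m * (gP w a ^ (m - j) * hP w a ^ j).coeff 0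
      + (1 + w) * a * ((gP w a ^ (m - j) * hP w a ^ j).coeff 1 * 1)
      = (1 + w) * (((m : ℂ) - 2 * j) * w) * (gP w a ^ (m - j) * hP w a ^ j).coeff 0 := by
  have E := congrArg (fun p : ℂ[X] => p.coeff 0) (key_identity w a ha m j hj)
  simp only [coeff_add, coeff_sub, coeff_C_mul, coeff_mul_X_zero, coeff_derivative] at E
  have hX2 : ((derivative (gP w a ^ (m - j) * hP w a ^ j)) * X ^ 2).coeff 0 = 0 := by
    rw [coeff_mul_X_pow']; norm_num
  rw [hX2, show (0:ℕ) + 1 = 1 from rfl] at E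
  push_cast at E ⊢
  linear_combination E

lemma coeff_E1 (w a : ℂ) (ha : a ^ 2 = w ^ 2 - 1) (m j : ℕ) (hj : j ≤ m) :
    (1 + w) * m * (gP w a ^ (m - j) * hP w a ^ j).coeff 1
      + (1 + w) * m * a * (gP w a ^ (m - j) * hP w a ^ j).coeff 0
      + (1 + w) * a * ((gP w a ^ (m - j) * hP w a ^ j).coeff 2 * 2)
      - 2 * (1 + w) * ((gP w a ^ (m - j) * hP w a ^ j).coeff 1 * 1)
      = (1 + w) * (((m : ℂ) - 2 * j) * w) * (gP w a ^ (m - j) * hP w a ^ j).coeff 1 := by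
  have E := congrArg (fun p : ℂ[X] => p.coeff 1) (key_identity w a ha m j hj)
  simp only [coeff_add, coeff_sub, coeff_C_mul] at E
  have c1 : ∀ p : ℂ[X], (p * X).coeff 1 = p.coeff 0 := fun p => coeff_mul_X p 0
  rw [c1, c1] at E
  have hX2 : ((derivative (gP w a ^ (m - j) * hP w a ^ j)) * X ^ 2).coeff (0 + 1) = 0 := by
    rw [coeff_mul_X_pow']; norm_num
  rw [hX2] at E
  simp only [coeff_derivative] at E
  rw [show (0:ℕ) + 1 = 1 from rfl, show (1:ℕ) + 1 = 2 from rfl] at E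
  push_cast at E ⊢
  linear_combination E

lemma coeff_E2 (w a : ℂ) (ha : a ^ 2 = w ^ 2 - 1) (m j k : ℕ) (hj : j ≤ m) :
    (1 + w) * m * (gP w a ^ (m - j) * hP w a ^ j).coeff (k + 2)
      + (1 + w) * m * a * (gP w a ^ (m - j) * hP w a ^ j).coeff (k + 1)
      + (1 + w) * a * ((gP w a ^ (m - j) * hP w a ^ j).coeff (k + 3) * ((k:ℂ) + 3))
      - 2 * (1 + w) * ((gP w a ^ (m - j) * hP w a ^ j).coeff (k + 2) * ((k:ℂ) + 2))
      - (1 + w) * a * ((gP w a ^ (m - j) * hP w a ^ j).coeff (k + 1) * ((k:ℂ) + 1))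
      = (1 + w) * (((m : ℂ) - 2 * j) * w)
          * (gP w a ^ (m - j) * hP w a ^ j).coeff (k + 2) := by
  have E := congrArg (fun p : ℂ[X] => p.coeff (k + 2)) (key_identity w a ha m j hj)
  simp only [coeff_add, coeff_sub, coeff_C_mul] at E
  rw [coeff_mul_X_pow] at E
  rw [show k + 2 = (k + 1) + 1 from rfl] at E
  rw [coeff_mul_X, coeff_mul_X] at E
  simp only [coeff_derivative] at E
  rw [show k + 1 + 1 = k + 2 from rfl, show k + 1 + 1 + 1 = k + 3 from rfl] at E
  push_cast at E ⊢
  linear_combination E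

lemma eigen (α : ℝ) (hα : |α| < 1) (m j : ℕ) (hj : j ≤ m) :
    ∃ v : Fin (m + 1) → ℂ, v ≠ 0 ∧
      (Amat m α).mulVec v
        = ((((m : ℂ) - 2 * j) * ((Real.sqrt (1 - α ^ 2) : ℝ) : ℂ))) • v := by
  have habs := abs_lt.mp hα
  have h0 : (0:ℝ) ≤ 1 - α ^ 2 := by nlinarith
  set w : ℂ := ((Real.sqrt (1 - α ^ 2) : ℝ) : ℂ) with hw_def
  have hw2 : w ^ 2 = 1 - (α : ℂ) ^ 2 := by
    rw [hw_def, ← Complex.ofReal_pow, Real.sq_sqrt h0]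
    push_cast; ring
  have h1w : (1 : ℂ) + w ≠ 0 := by
    have : (1 : ℂ) + w = ((1 + Real.sqrt (1 - α ^ 2) : ℝ) : ℂ) := by
      rw [hw_def]; push_cast; ring
    rw [this, Complex.ofReal_ne_zero]
    have := Real.sqrt_nonneg (1 - α ^ 2)
    positivity
  set a : ℂ := Complex.I * (α : ℂ) with ha_def
  have ha : a ^ 2 = w ^ 2 - 1 := by
    rw [hw2, ha_def, mul_pow, Complex.I_sq]; ring
  set f : ℂ[X] := gP w a ^ (m - j) * hP w a ^ j with hf_def
  have hg1 : (gP w a).natDegree ≤ 1 := by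
    unfold gP
    refine (natDegree_add_le _ _).trans (max_le (by simp) ?_)
    exact (natDegree_C_mul_le a X).trans (by simp)
  have hh1 : (hP w a).natDegree ≤ 1 := by
    unfold hP
    refine (natDegree_sub_le _ _).trans (max_le (by simp) ?_)
    exact (natDegree_C_mul_le _ X).trans (by simp)
  have hdeg : f.natDegree ≤ m := by
    calc f.natDegree ≤ (gP w a ^ (m - j)).natDegree + (hP w a ^ j).natDegree :=
          natDegree_mul_le
    _ ≤ (m - j) * 1 + j * 1 := by
        gcongr
        · exact natDegree_pow_le.trans (Nat.mul_le_mul_left _ hg1)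
        · exact natDegree_pow_le.trans (Nat.mul_le_mul_left _ hh1)
    _ ≤ m := by omega
  have hgne : gP w a ≠ 0 := by
    intro hcon
    have h01 : (gP w a).coeff 0 = 1 + w := by simp [gP]
    rw [hcon, coeff_zero] at h01
    exact h1w h01.symm
  have hhne : hP w a ≠ 0 := by
    intro hcon
    have h11 : (hP w a).coeff 1 = -(1 + w) := by
      simp [hP, coeff_sub, coeff_C]
    rw [hcon, coeff_zero] at h11
    exact h1w (by linear_combination h11)
  have hfne : f ≠ 0 := mul_ne_zero (pow_ne_zero _ hgne) (pow_ne_zero _ hhne)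
  refine ⟨fun l => f.coeff (l : ℕ), ?_, ?_⟩
  · intro hv0
    apply hfne
    ext i
    rcases le_or_gt i m with hi | hi
    · have := congrFun hv0 ⟨i, by omega⟩
      simpa using this
    · simp [coeff_eq_zero_of_natDegree_lt (lt_of_le_of_lt hdeg hi)]
  · funext k
    have hcm : f.coeff (m + 1) = 0 :=
      coeff_eq_zero_of_natDegree_lt (by omega)
    rw [Amat_mulVec m α (fun l => f.coeff l) hcm k]
    simp only [Pi.smul_apply, smul_eq_mul]
    rw [← ha_def]
    rcases k3 : (k : ℕ) with _ | kv
    · rw [if_pos rfl]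
      apply mul_left_cancel₀ h1w
      have E0 := coeff_E0 w a ha m j hj
      rw [← hf_def] at E0
      push_cast
      linear_combination E0
    · rw [if_neg (by omega)]
      have hsub : kv + 1 - 1 = kv := by omega
      rw [hsub]
      rcases kv with _ | kv2
      · apply mul_left_cancel₀ h1w
        have E1 := coeff_E1 w a ha m j hj
        rw [← hf_def] at E1
        push_cast
        linear_combination E1
      · apply mul_left_cancel₀ h1w
        have E2 := coeff_E2 w a ha m j kv2 hj
        rw [← hf_def] at E2
        rw [show kv2 + 1 + 1 = kv2 + 2 from rfl, show kv2 + 1 + 1 + 1 = kv2 + 3 from rfl]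
        push_cast
        linear_combination E2

lemma charpoly_root_of_eigen {n : Type*} [Fintype n] [DecidableEq n]
    (M : Matrix n n ℂ) (μ : ℂ) (v : n → ℂ) (hv : v ≠ 0)
    (h : M.mulVec v = μ • v) : M.charpoly.IsRoot μ := by
  have hdet : (Matrix.scalar n μ - M).det = 0 := by
    rw [← Matrix.exists_mulVec_eq_zero_iff]
    refine ⟨v, hv, ?_⟩
    rw [Matrix.sub_mulVec, h]
    have : Matrix.scalar n μ = μ • (1 : Matrix n n ℂ) := by
      ext i j
      simp [Matrix.scalar, Matrix.smul_apply, Matrix.one_apply, Matrix.diagonal_apply,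
        Algebra.algebraMap_eq_smul_one]
    rw [this, Matrix.smul_mulVec, Matrix.one_mulVec, sub_self]
  have : M.charpoly.eval μ = (Matrix.scalar n μ - M).det := by
    rw [Matrix.charpoly, _root_.eval_det, Matrix.matPolyEquiv_charmatrix]
    simp
  simpa [Polynomial.IsRoot, this] using hdet

theorem main_all (α : ℝ) (hα : |α| < 1) (m : ℕ) :
    (Amat m α).charpoly = ∏ k ∈ Finset.range (m + 1),
      (X - C (((m : ℂ) - 2 * (k : ℂ)) * ((Real.sqrt (1 - α ^ 2) : ℝ) : ℂ))) := by
  have habs := abs_lt.mp hα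
  set w : ℂ := ((Real.sqrt (1 - α ^ 2) : ℝ) : ℂ) with hw_def
  have hwne : w ≠ 0 := by
    rw [hw_def, Complex.ofReal_ne_zero]
    have : 0 < Real.sqrt (1 - α ^ 2) := Real.sqrt_pos.2 (by nlinarith)
    exact ne_of_gt this
  set μ : ℕ → ℂ := fun j => ((m : ℂ) - 2 * (j : ℂ)) * w with hμ_def
  set p := (Amat m α).charpoly with hp_def
  have hmono : p.Monic := Matrix.charpoly_monic _
  have hpne : p ≠ 0 := hmono.ne_zero
  have hdeg : p.natDegree = m + 1 := by
    rw [hp_def, Matrix.charpoly_natDegree_eq_dim, Fintype.card_fin]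
  have hsplits : Splits p := IsAlgClosed.splits p
  have hcard : p.roots.card = m + 1 := by
    rw [splits_iff_card_roots.mp hsplits, hdeg]
  have hroot : ∀ j ∈ Finset.range (m + 1), p.IsRoot (μ j) := by
    intro j hjm
    obtain ⟨v, hv, heig⟩ := eigen α hα m j (by
      have := Finset.mem_range.1 hjm; omega)
    exact charpoly_root_of_eigen _ _ v hv heig
  have hinj : ∀ x ∈ Finset.range (m + 1), ∀ y ∈ Finset.range (m + 1),
      μ x = μ y → x = y := by
    intro x _ y _ hxy
    rw [hμ_def] at hxy
    simp only at hxy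
    have h2 : ((m : ℂ) - 2 * x) = ((m : ℂ) - 2 * y) := mul_right_cancel₀ hwne hxy
    have : (x : ℂ) = (y : ℂ) := by linear_combination -h2 / 2
    exact_mod_cast this
  set S : Finset ℂ := (Finset.range (m + 1)).image μ with hS_def
  have hScard : S.card = m + 1 := by
    rw [hS_def, Finset.card_image_of_injOn hinj, Finset.card_range]
  have hSle : S.val ≤ p.roots := by
    refine (Multiset.le_iff_subset S.nodup).2 ?_
    intro x hx
    obtain ⟨j, hj, rfl⟩ := Finset.mem_image.1 (show x ∈ (Finset.range (m + 1)).image μ from hx)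
    exact (Polynomial.mem_roots hpne).2 (hroot j hj)
  have hSeq : S.val = p.roots :=
    Multiset.eq_of_le_of_card_le hSle (by
      rw [hcard]
      show m + 1 ≤ S.val.card
      rw [← Finset.card_def, hScard])
  have hfact := hsplits.eq_prod_roots_of_monic hmono
  rw [hfact, ← hSeq, hS_def]
  rw [← Finset.prod_eq_multiset_prod]
  rw [Finset.prod_image hinj]

/-- for real `α` with `|α| < 1` and `ω = √(1−α²)`, the
characteristic polynomial of `A_m` equals `∏_{k=0}^{m} (λ − (m−2k)ω)`;
in particular this holds for `m = 2` and `m = 3`. -/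
theorem Amat_charpoly (α : ℝ) (hα : |α| < 1) :
    letI ω : ℝ := Real.sqrt (1 - α ^ 2)
    (∀ m : ℕ, (Amat m α).charpoly =
        ∏ k ∈ Finset.range (m + 1),
          (X - C (((m : ℂ) - 2 * (k : ℂ)) * (ω : ℂ)))) ∧
    (Amat 2 α).charpoly =
        ∏ k ∈ Finset.range 3, (X - C (((2 : ℂ) - 2 * (k : ℂ)) * (ω : ℂ))) ∧
    (Amat 3 α).charpoly =
        ∏ k ∈ Finset.range 4, (X - C (((3 : ℂ) - 2 * (k : ℂ)) * (ω : ℂ))) := by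
  refine ⟨fun m => main_all α hα m, ?_, ?_⟩
  · simpa using main_all α hα 2
  · simpa using main_all α hα 3
end
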